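/- Let 𝓕 be a B_n-generalized complex structure on an odd exact Courant algebroid E over an n-dimensional manifold M, with i-eigenbundle L ⊂ E^ℂ. Then any two B_n-complex generalized connections D, D̃ (i.e. torsion-free generalized connections preserving 𝓕) are related by D̃ = D + Re(sk η) for some η ∈ Γ(S²L* ⊗ L̄*). -/

import Mathlib

/-! Common framework: Courant algebroids over a smooth manifold, described through
their fibers, their (smooth) sections, scalar product, anchor and Dorfman bracket;
generalized connections, torsion, generalized metrics, `Bₙ`-generalized almost
complex structures on odd exact Courant algebroids, and generalized complex
structures on Courant algebroids of even rank. -/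

open Manifold

noncomputable section

/-- A bilinear symmetric form on a real vector space has signature `(p, q)`. -/
def BilinSignature {V : Type*} [AddCommGroup V] [Module ℝ V]
    (g : V →ₗ[ℝ] V →ₗ[ℝ] ℝ) (p q : ℕ) : Prop :=
  ∃ P N : Submodule ℝ V, IsCompl P N ∧
    (∀ v ∈ P, ∀ w ∈ N, g v w = 0) ∧
    Module.finrank ℝ P = p ∧ Module.finrank ℝ N = q ∧
    (∀ v ∈ P, v ≠ 0 → 0 < g v v) ∧ (∀ v ∈ N, v ≠ 0 → g v v < 0)

/-- The derivative `(π(u)f)(x)` of a function `f` in the direction of a tangent vector. -/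
def mdirDeriv {m : ℕ} {M : Type*} [TopologicalSpace M]
    [ChartedSpace (EuclideanSpace ℝ (Fin m)) M]
    [IsManifold (𝓡 m) (⊤ : ℕ∞) M]
    (f : M → ℝ) (x : M) (v : TangentSpace (𝓡 m) x) : ℝ :=
  mfderiv (𝓡 m) 𝓘(ℝ, ℝ) f x v

/-- A Courant algebroid over an `m`-dimensional manifold `M`, presented by the data of
its fibers, its smooth sections, its fiberwise scalar product `⟨·,·⟩`, its anchor
`π : E → TM` and its (Dorfman) bracket `[·,·]` on sections, subject to the axioms
`[u,[v,w]] = [[u,v],w] + [v,[u,w]]`, `[u,fv] = f[u,v] + (π(u)f)v`,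
`π(u)⟨v,w⟩ = ⟨[u,v],w⟩ + ⟨v,[u,w]⟩` and `⟨[u,v]+[v,u],w⟩ = π(w)⟨u,v⟩`. -/
structure CourantAlgebroid (m : ℕ) (M : Type*) [TopologicalSpace M]
    [ChartedSpace (EuclideanSpace ℝ (Fin m)) M]
    [IsManifold (𝓡 m) (⊤ : ℕ∞) M] where
  /-- the fiber of the vector bundle `E` at `x ∈ M` -/
  Fib : M → Type
  [fibAdd : ∀ x, AddCommGroup (Fib x)]
  [fibMod : ∀ x, Module ℝ (Fib x)]
  [fibFin : ∀ x, FiniteDimensional ℝ (Fib x)]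
  /-- the set `Γ(E)` of smooth sections of `E` -/
  secs : Set (∀ x, Fib x)
  secs_zero : (fun x => (0 : Fib x)) ∈ secs
  secs_add : ∀ {u v}, u ∈ secs → v ∈ secs → (fun x => u x + v x) ∈ secs
  secs_neg : ∀ {u}, u ∈ secs → (fun x => -(u x)) ∈ secs
  secs_smul : ∀ {f : M → ℝ}, ContMDiff (𝓡 m) 𝓘(ℝ, ℝ) (⊤ : ℕ∞) f →
    ∀ {u}, u ∈ secs → (fun x => f x • u x) ∈ secs
  /-- the scalar product `⟨·,·⟩` -/
  g : ∀ x, Fib x →ₗ[ℝ] Fib x →ₗ[ℝ] ℝ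
  g_symm : ∀ x u v, g x u v = g x v u
  g_nondeg : ∀ x (v : Fib x), (∀ w, g x v w = 0) → v = 0
  g_smooth : ∀ {u v}, u ∈ secs → v ∈ secs →
    ContMDiff (𝓡 m) 𝓘(ℝ, ℝ) (⊤ : ℕ∞) (fun x => g x (u x) (v x))
  /-- the anchor `π : E → TM` -/
  anchor : ∀ x, Fib x →ₗ[ℝ] TangentSpace (𝓡 m) x
  anchor_smooth : ∀ {u}, u ∈ secs →
    ContMDiff (𝓡 m) (𝓡 m).tangent (⊤ : ℕ∞)
      (fun x => (⟨x, anchor x (u x)⟩ : TangentBundle (𝓡 m) M))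
  /-- the Dorfman bracket `[·,·]` -/
  bracket : (∀ x, Fib x) → (∀ x, Fib x) → (∀ x, Fib x)
  bracket_secs : ∀ {u v}, u ∈ secs → v ∈ secs → bracket u v ∈ secs
  bracket_add_left : ∀ {u v w}, u ∈ secs → v ∈ secs → w ∈ secs →
    bracket (fun x => u x + v x) w = fun x => bracket u w x + bracket v w x
  bracket_add_right : ∀ {u v w}, u ∈ secs → v ∈ secs → w ∈ secs →
    bracket u (fun x => v x + w x) = fun x => bracket u v x + bracket u w x
  bracket_smul_left : ∀ (c : ℝ) {u v}, u ∈ secs → v ∈ secs →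
    bracket (fun x => c • u x) v = fun x => c • bracket u v x
  bracket_smul_right : ∀ (c : ℝ) {u v}, u ∈ secs → v ∈ secs →
    bracket u (fun x => c • v x) = fun x => c • bracket u v x
  /-- `[u,[v,w]] = [[u,v],w] + [v,[u,w]]` -/
  jacobi : ∀ {u v w}, u ∈ secs → v ∈ secs → w ∈ secs →
    bracket u (bracket v w)
      = fun x => bracket (bracket u v) w x + bracket v (bracket u w) x
  /-- `[u,fv] = f[u,v] + (π(u)f) v` -/
  leibniz : ∀ {f : M → ℝ}, ContMDiff (𝓡 m) 𝓘(ℝ, ℝ) (⊤ : ℕ∞) f → ∀ {u v},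
    u ∈ secs → v ∈ secs →
    bracket u (fun x => f x • v x)
      = fun x => f x • bracket u v x
          + mdirDeriv f x (anchor x (u x)) • v x
  /-- `π(u)⟨v,w⟩ = ⟨[u,v],w⟩ + ⟨v,[u,w]⟩` -/
  compat : ∀ {u v w}, u ∈ secs → v ∈ secs → w ∈ secs → ∀ x,
    mdirDeriv (fun y => g y (v y) (w y)) x (anchor x (u x))
      = g x (bracket u v x) (w x) + g x (v x) (bracket u w x)
  /-- `⟨[u,v]+[v,u],w⟩ = π(w)⟨u,v⟩` -/
  symBracket : ∀ {u v w}, u ∈ secs → v ∈ secs → w ∈ secs → ∀ x,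
    g x (bracket u v x + bracket v u x) (w x)
      = mdirDeriv (fun y => g y (u y) (v y)) x (anchor x (w x))

attribute [instance] CourantAlgebroid.fibAdd CourantAlgebroid.fibMod CourantAlgebroid.fibFin

/-- An odd exact Courant algebroid over an `n`-dimensional manifold: a Courant algebroid
of rank `2n+1` whose scalar product has signature `(n+1, n)`. -/
structure OddExactCourantAlgebroid (n : ℕ) (M : Type*) [TopologicalSpace M]
    [ChartedSpace (EuclideanSpace ℝ (Fin n)) M]
    [IsManifold (𝓡 n) (⊤ : ℕ∞) M]
    extends CourantAlgebroid n M where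
  rank_eq : ∀ x, Module.finrank ℝ (Fib x) = 2 * n + 1
  g_sig : ∀ x, BilinSignature (g x) (n + 1) n

variable {m : ℕ} {M : Type*} [TopologicalSpace M]
  [ChartedSpace (EuclideanSpace ℝ (Fin m)) M]
  [IsManifold (𝓡 m) (⊤ : ℕ∞) M]

/-- A generalized connection `D` on a Courant algebroid: `D_v (f u) = (π(v)f) u + f D_v u`
and `π(w)⟨u,v⟩ = ⟨D_w u, v⟩ + ⟨u, D_w v⟩`; moreover `D_v u` is tensorial
(`C^∞(M)`-linear) in the direction `v`. `D.D v u` denotes `D_v u`. -/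
structure GenConnection (E : CourantAlgebroid m M) where
  D : (∀ x, E.Fib x) → (∀ x, E.Fib x) → (∀ x, E.Fib x)
  d_secs : ∀ {v u}, v ∈ E.secs → u ∈ E.secs → D v u ∈ E.secs
  add_dir : ∀ {v w u}, v ∈ E.secs → w ∈ E.secs → u ∈ E.secs →
    D (fun x => v x + w x) u = fun x => D v u x + D w u x
  smul_dir : ∀ {f : M → ℝ}, ContMDiff (𝓡 m) 𝓘(ℝ, ℝ) (⊤ : ℕ∞) f → ∀ {v u},
    v ∈ E.secs → u ∈ E.secs →
    D (fun x => f x • v x) u = fun x => f x • D v u x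
  add_sec : ∀ {v u w}, v ∈ E.secs → u ∈ E.secs → w ∈ E.secs →
    D v (fun x => u x + w x) = fun x => D v u x + D v w x
  smul_sec : ∀ (c : ℝ) {v u}, v ∈ E.secs → u ∈ E.secs →
    D v (fun x => c • u x) = fun x => c • D v u x
  leibniz : ∀ {f : M → ℝ}, ContMDiff (𝓡 m) 𝓘(ℝ, ℝ) (⊤ : ℕ∞) f → ∀ {v u},
    v ∈ E.secs → u ∈ E.secs →
    D v (fun x => f x • u x)
      = fun x => mdirDeriv f x (E.anchor x (v x)) • u x + f x • D v u x
  metric : ∀ {u v w}, u ∈ E.secs → v ∈ E.secs → w ∈ E.secs → ∀ x,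
    mdirDeriv (fun y => E.g y (u y) (v y)) x (E.anchor x (w x))
      = E.g x (D w u x) (v x) + E.g x (u x) (D w v x)

namespace GenConnection

variable {E : CourantAlgebroid m M}

/-- The torsion `T^D(u,v,w) = ⟨D_u v − D_v u − [u,v], w⟩ + ⟨D_w u, v⟩` of a generalized
connection. -/
def torsion (D : GenConnection E) (u v w : ∀ x, E.Fib x) : M → ℝ :=
  fun x => E.g x (D.D u v x - D.D v u x - E.bracket u v x) (w x) + E.g x (D.D w u x) (v x)

/-- A generalized connection is torsion-free if its torsion vanishes. -/
def TorsionFree (D : GenConnection E) : Prop :=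
  ∀ {u v w}, u ∈ E.secs → v ∈ E.secs → w ∈ E.secs → ∀ x, D.torsion u v w x = 0

/-- `D` preserves the endomorphism (field) `F`, i.e. `DF = 0`:
`(D_u F) v = D_u (F v) − F (D_u v) = 0` for all sections `u`, `v`. -/
def PreservesEnd (D : GenConnection E) (F : ∀ x, E.Fib x →ₗ[ℝ] E.Fib x) : Prop :=
  ∀ {u v}, u ∈ E.secs → v ∈ E.secs → ∀ x, D.D u (fun y => F y (v y)) x = F x (D.D u v x)

/-- `D` preserves the section `s`, i.e. `Ds = 0`. -/
def PreservesSec (D : GenConnection E) (s : ∀ x, E.Fib x) : Prop :=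
  ∀ {v}, v ∈ E.secs → ∀ x, D.D v s x = 0

end GenConnection

/-- The i-eigenbundle `L ⊂ E^ℂ` of a family `F` of endomorphisms has its space of
sections closed under the (complexified) Dorfman bracket.  A complex section
`s = u + iv` of `E^ℂ` lies in `Γ(L)` iff `F u = -v` and `F v = u`; the bracket of
`u + iv` and `u' + iv'` is `([u,u'] - [v,v']) + i([u,v'] + [v,u'])`. -/
def CourantAlgebroid.IntegrableF (E : CourantAlgebroid m M)
    (F : ∀ x, E.Fib x →ₗ[ℝ] E.Fib x) : Prop :=
  ∀ {u v u' v'}, u ∈ E.secs → v ∈ E.secs → u' ∈ E.secs → v' ∈ E.secs →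
    (∀ x, F x (u x) = -(v x)) → (∀ x, F x (v x) = u x) →
    (∀ x, F x (u' x) = -(v' x)) → (∀ x, F x (v' x) = u' x) →
    (∀ x, F x (E.bracket u u' x - E.bracket v v' x)
        = -(E.bracket u v' x + E.bracket v u' x)) ∧
    (∀ x, F x (E.bracket u v' x + E.bracket v u' x)
        = E.bracket u u' x - E.bracket v v' x)

/-- A generalized (admissible) metric on a Courant algebroid, described by the associated
orthogonal, `⟨·,·⟩`-symmetric involution `G^end` of `E`; its `−1`-eigenbundle `E₋`
(the subbundle defining the generalized metric) is required to have nondegenerate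
scalar product and anchor restricting to an isomorphism `E₋ → TM`. -/
structure GenMetric (E : CourantAlgebroid m M) where
  Gend : ∀ x, E.Fib x →ₗ[ℝ] E.Fib x
  smooth : ∀ {u}, u ∈ E.secs → (fun x => Gend x (u x)) ∈ E.secs
  symm : ∀ x u v, E.g x (Gend x u) v = E.g x u (Gend x v)
  invol : ∀ x v, Gend x (Gend x v) = v
  nondeg_minus : ∀ x (v : E.Fib x), Gend x v = -v →
    (∀ w, Gend x w = -w → E.g x v w = 0) → v = 0
  anchor_bij : ∀ x, Function.Bijective
    (fun v : {w : E.Fib x // Gend x w = -w} => E.anchor x v.1)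

/-- `DG = 0`, i.e. `π(w) G(u,v) = G(D_w u, v) + G(u, D_w v)` where
`G(u,v) = ⟨G^end u, v⟩`. -/
def GenConnection.PreservesMetric {E : CourantAlgebroid m M}
    (D : GenConnection E) (G : GenMetric E) : Prop :=
  ∀ {u v w}, u ∈ E.secs → v ∈ E.secs → w ∈ E.secs → ∀ x,
    mdirDeriv (fun y => E.g y (G.Gend y (u y)) (v y)) x (E.anchor x (w x))
      = E.g x (G.Gend x (D.D w u x)) (v x) + E.g x (G.Gend x (u x)) (D.D w v x)

/-- A `Bₙ`-generalized almost complex structure on an odd exact Courant algebroid `E`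
over an `n`-dimensional manifold: a `⟨·,·⟩`-skew-symmetric endomorphism `𝓕` of rank `2n`
satisfying `𝓕² = −Id + (−1)ⁿ ⟨·,u₀⟩ u₀` for a section `u₀` with `⟨u₀,u₀⟩ = (−1)ⁿ`. -/
structure BnGACS {n : ℕ} {M' : Type*} [TopologicalSpace M']
    [ChartedSpace (EuclideanSpace ℝ (Fin n)) M']
    [IsManifold (𝓡 n) (⊤ : ℕ∞) M']
    (E : OddExactCourantAlgebroid n M') where
  F : ∀ x, E.Fib x →ₗ[ℝ] E.Fib x
  smooth : ∀ {u}, u ∈ E.secs → (fun x => F x (u x)) ∈ E.secs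
  skew : ∀ x u v, E.g x (F x u) v = - E.g x u (F x v)
  u₀ : ∀ x, E.Fib x
  u₀_mem : u₀ ∈ E.secs
  u₀_norm : ∀ x, E.g x (u₀ x) (u₀ x) = (-1 : ℝ) ^ n
  F_sq : ∀ x v, F x (F x v) = -v + ((-1 : ℝ) ^ n * E.g x v (u₀ x)) • u₀ x
  rank_F : ∀ x, Module.finrank ℝ (LinearMap.range (F x)) = 2 * n

namespace BnGACS

variable {n : ℕ} {M' : Type*} [TopologicalSpace M']
  [ChartedSpace (EuclideanSpace ℝ (Fin n)) M']
  [IsManifold (𝓡 n) (⊤ : ℕ∞) M']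
  {E : OddExactCourantAlgebroid n M'}

/-- `𝓕` applied to a section. -/
def ap (J : BnGACS E) (u : ∀ x, E.Fib x) : ∀ x, E.Fib x := fun x => J.F x (u x)

/-- Integrability of a `Bₙ`-generalized almost complex structure: the sections of its
i-eigenbundle `L ⊂ E^ℂ` are closed under the Dorfman bracket. -/
def Integrable (J : BnGACS E) : Prop :=
  CourantAlgebroid.IntegrableF E.toCourantAlgebroid J.F

/-- `u ∈ Γ(U^⊥)`, where `U = Ker 𝓕` is spanned by `u₀`. -/
def Perp (J : BnGACS E) (u : ∀ x, E.Fib x) : Prop :=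
  ∀ x, E.g x (u x) (J.u₀ x) = 0

/-- The Nijenhuis tensor `N_𝓕(u,v) = [𝓕u,𝓕v] − [u,v] − 𝓕([𝓕u,v] + [u,𝓕v])`. -/
def Nij (J : BnGACS E) (u v : ∀ x, E.Fib x) : ∀ x, E.Fib x :=
  fun x => E.bracket (J.ap u) (J.ap v) x - E.bracket u v x
    - J.F x (E.bracket (J.ap u) v x + E.bracket u (J.ap v) x)

/-- The Dorfman-Lie derivative `(𝐋_{u₀} 𝓕) u = [u₀, 𝓕u] − 𝓕 [u₀, u]`. -/
def lieF (J : BnGACS E) (u : ∀ x, E.Fib x) : ∀ x, E.Fib x :=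
  fun x => E.bracket J.u₀ (J.ap u) x - J.F x (E.bracket J.u₀ u x)

/-- The covariant derivative `(D_u 𝓕) v = D_u (𝓕 v) − 𝓕 (D_u v)`. -/
def covF (J : BnGACS E) (D : GenConnection E.toCourantAlgebroid)
    (u v : ∀ x, E.Fib x) : ∀ x, E.Fib x :=
  fun x => D.D u (J.ap v) x - J.F x (D.D u v x)

end BnGACS

/-- A generalized (almost) complex structure on a Courant algebroid of even rank:
a `⟨·,·⟩`-skew-symmetric endomorphism `𝓙` with `𝓙² = −Id`, whose i-eigenbundle has
sections closed under the Dorfman bracket. -/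
structure GenComplex (E : CourantAlgebroid m M) where
  J : ∀ x, E.Fib x →ₗ[ℝ] E.Fib x
  smooth : ∀ {u}, u ∈ E.secs → (fun x => J x (u x)) ∈ E.secs
  skew : ∀ x u v, E.g x (J x u) v = - E.g x u (J x v)
  sq : ∀ x v, J x (J x v) = -v
  integrable : CourantAlgebroid.IntegrableF E J

end

variable {n : ℕ} {M : Type*} [TopologicalSpace M]
  [ChartedSpace (EuclideanSpace ℝ (Fin n)) M]
  [IsManifold (𝓡 n) (⊤ : ℕ∞) M]

/-!
`A(u, v, w) = ⟨(D̃ - D)_u v, w⟩` is a tensor: compatibility with `⟨·,·⟩` makes it skew in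
`(v, w)`, and torsion-freeness of both connections gives `A(u, v, w) = A(v, u, w) - A(w, u, v)`,
so that `A` depends on `u` only through its value. Both connections preserve `𝓕`,
so `A(u, 𝓕v, w) = -A(u, v, 𝓕w)`; since `𝓕u₀ = 0` and `𝓕² = -1` modulo `u₀`, `A` vanishes
as soon as one argument is `u₀`. For such a form,
`η(a, b, c) = ½(A(a, b, c) - A(𝓕a, 𝓕b, c)) - ½ i (A(𝓕a, b, c) + A(a, 𝓕b, c))`
is symmetric in `(a, b)`, of type `(1,0)` in `a, b` and `(0,1)` in `c`, and `Re (sk η) = A`.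

Values of smooth sections need not fill the fibres, so `A` is extended from them by a
projection commuting with `𝓕`; it exists because `𝓕³ = -𝓕` makes `𝓕` semisimple.
-/

open Complex Polynomial

theorem Module.End.IsSemisimple.exists_projection_commute {R V : Type*} [CommRing R]
    [AddCommGroup V] [Module R V] {f : Module.End R V} (hf : f.IsSemisimple)
    {p : Submodule R V} (hp : p ∈ f.invtSubmodule) :
    ∃ P : Module.End R V, (∀ v, P v ∈ p) ∧ (∀ v ∈ p, P v = v) ∧ Commute P f := by
  obtain ⟨q, hq, hpq⟩ := Module.End.isSemisimple_iff.mp hf p hp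
  refine ⟨p.projection q hpq, fun v => (p.projectionOnto q hpq v).2,
    fun v hv => Submodule.projection_apply_of_mem_left hpq hv, ?_⟩
  rw [LinearMap.IsIdempotentElem.commute_iff (Submodule.isIdempotentElem_projection hpq),
    Submodule.range_projection, Submodule.ker_projection]
  exact ⟨hp, hq⟩

lemma Polynomial.squarefree_X_pow_three_add_X : Squarefree (X ^ 3 + X : ℝ[X]) := by
  refine Separable.squarefree ⟨C (-9 / 2) * X, C (3 / 2) * X ^ 2 + 1, funext fun r => ?_⟩
  simp only [derivative_add, derivative_X_pow, derivative_X, eval_add, eval_mul, eval_C, eval_X,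
    eval_pow, eval_one]
  norm_num
  ring

lemma Module.End.isSemisimple_of_cube_eq_neg {V : Type*} [AddCommGroup V] [Module ℝ V]
    {f : Module.End ℝ V} (hf : ∀ v, f (f (f v)) = -f v) : f.IsSemisimple := by
  refine isSemisimple_of_squarefree_aeval_eq_zero squarefree_X_pow_three_add_X ?_
  ext v
  simp [pow_succ, hf]

section ComplexDifferenceForm

variable {V : Type*} [AddCommGroup V] [Module ℝ V]

/-- The identities satisfied by `⟨(D̃ - D)_a b, c⟩` for torsion-free connections `D, D̃`
preserving `F`, when `F² = -1` modulo a line killed by `F`. -/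
structure IsComplexDifferenceForm (F : Module.End ℝ V) (A : V →ₗ[ℝ] V →ₗ[ℝ] V →ₗ[ℝ] ℝ) :
    Prop where
  skew : ∀ a b c, A a b c = -A a c b
  torsion : ∀ a b c, A a b c = A b a c - A c a b
  map_mid : ∀ a b c, A a (F b) c = -A a b (F c)
  sq_left : ∀ a b c, A (F (F a)) b c = -A a b c
  sq_right : ∀ a b c, A a b (F (F c)) = -A a b c

/-- The `η` of the theorem: the real-trilinear extension of the `S²L* ⊗ L̄*`-component of `A`. -/
noncomputable def complexPart (F : Module.End ℝ V) (A : V →ₗ[ℝ] V →ₗ[ℝ] V →ₗ[ℝ] ℝ) :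
    V →ₗ[ℝ] V →ₗ[ℝ] V →ₗ[ℝ] ℂ :=
  let B := A.compr₂ (LinearMap.compRight ℝ ofRealCLM.toLinearMap)
  (2 : ℂ)⁻¹ • (B - B.compl₁₂ F F - I • (B.comp F + B.compl₂ F))

variable {F : Module.End ℝ V} {A : V →ₗ[ℝ] V →ₗ[ℝ] V →ₗ[ℝ] ℝ}

lemma complexPart_apply (a b c : V) :
    complexPart F A a b c = (A a b c - A (F a) (F b) c - I * (A (F a) b c + A a (F b) c)) / 2 := by
  simp [complexPart, div_eq_inv_mul, mul_add]

lemma complexPart_re (a b c : V) :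
    (complexPart F A a b c).re = (A a b c - A (F a) (F b) c) / 2 := by
  simp [complexPart_apply]

lemma complexPart_im (a b c : V) :
    (complexPart F A a b c).im = -(A (F a) b c + A a (F b) c) / 2 := by
  simp [complexPart_apply]

namespace IsComplexDifferenceForm

lemma of_sq_eq {u₀ : V} {φ : V → ℝ} (skew : ∀ a b c, A a b c = -A a c b)
    (torsion : ∀ a b c, A a b c = A b a c - A c a b)
    (map_mid : ∀ a b c, A a (F b) c = -A a b (F c))
    (hF : ∀ v, F (F v) = -v + φ v • u₀) (hu₀ : F u₀ = 0) :
    IsComplexDifferenceForm F A := by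
  have right : ∀ a b, A a b u₀ = 0 := fun a b => by
    have hb : b = φ b • u₀ - F (F b) := by rw [hF]; abel
    have hF2 : A a (F (F b)) u₀ = 0 := by rw [map_mid, hu₀, map_zero, neg_zero]
    have hu₀u₀ : A a u₀ u₀ = 0 := by linarith [skew a u₀ u₀]
    rw [hb, map_sub, map_smul, LinearMap.sub_apply, LinearMap.smul_apply, hF2, hu₀u₀,
      smul_zero, sub_zero]
  have mid : ∀ a c, A a u₀ c = 0 := fun a c => by rw [skew, right, neg_zero]
  have left : ∀ b c, A u₀ b c = 0 := fun b c => by rw [torsion, mid, mid, sub_zero]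
  refine ⟨skew, torsion, map_mid, fun a b c => ?_, fun a b c => ?_⟩
  · simp [hF, left]
  · simp [hF, right]

variable (hA : IsComplexDifferenceForm F A)
include hA

lemma sq_mid (a b c : V) : A a (F (F b)) c = -A a b c := by
  rw [hA.map_mid, hA.map_mid, neg_neg, hA.sq_right]

lemma complexPart_comm (a b c : V) : complexPart F A a b c = complexPart F A b a c := by
  apply Complex.ext <;> simp only [complexPart_re, complexPart_im] <;>
    linarith [hA.torsion a b c, hA.torsion (F a) (F b) c, hA.torsion (F a) b c,
      hA.torsion a (F b) c, hA.map_mid c a (F b), hA.map_mid c a b, hA.sq_right c a b]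

lemma complexPart_map_left (a b c : V) :
    complexPart F A (F a) b c = I * complexPart F A a b c := by
  apply Complex.ext <;>
    simp only [complexPart_re, complexPart_im, mul_re, mul_im, I_re, I_im, hA.sq_left] <;> ring

lemma complexPart_map_mid (a b c : V) :
    complexPart F A a (F b) c = I * complexPart F A a b c := by
  rw [hA.complexPart_comm, hA.complexPart_map_left, hA.complexPart_comm]

lemma complexPart_map_right (a b c : V) :
    complexPart F A a b (F c) = -(I * complexPart F A a b c) := by
  apply Complex.ext <;>
    simp only [complexPart_re, complexPart_im, neg_re, neg_im, mul_re, mul_im, I_re, I_im] <;>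
    linarith [hA.map_mid a b c, hA.map_mid (F a) b c, hA.map_mid (F a) (F b) c,
      hA.map_mid a (F b) c, hA.sq_mid a b c, hA.sq_mid (F a) b c]

lemma re_complexPart_sub (a b c : V) :
    (complexPart F A a b c - complexPart F A a c b).re = A a b c := by
  simp only [sub_re, complexPart_re]
  linarith [hA.skew a b c, hA.skew (F a) (F c) b, hA.map_mid (F a) b c]

end IsComplexDifferenceForm

end ComplexDifferenceForm

def CourantAlgebroid.valueSpace (E : CourantAlgebroid n M) (x : M) : Submodule ℝ (E.Fib x) where
  carrier := {a | ∃ u ∈ E.secs, u x = a}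
  add_mem' := by rintro _ _ ⟨u, hu, rfl⟩ ⟨v, hv, rfl⟩; exact ⟨_, E.secs_add hu hv, rfl⟩
  zero_mem' := ⟨_, E.secs_zero, rfl⟩
  smul_mem' := by rintro c _ ⟨u, hu, rfl⟩; exact ⟨_, E.secs_smul contMDiff_const hu, rfl⟩

namespace GenConnection

variable {E : CourantAlgebroid n M} (D Dt : GenConnection E)

def diffForm (u v w : ∀ x, E.Fib x) (x : M) : ℝ :=
  E.g x (Dt.D u v x - D.D u v x) (w x)

variable {D Dt} {u u' v v' w w' : ∀ x, E.Fib x}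

lemma diffForm_swap (hu : u ∈ E.secs) (hv : v ∈ E.secs) (hw : w ∈ E.secs) (x : M) :
    diffForm D Dt u v w x = -diffForm D Dt u w v x := by
  have h := D.metric hv hw hu x
  have ht := Dt.metric hv hw hu x
  have hs := E.g_symm x (v x)
  simp only [diffForm, map_sub, LinearMap.sub_apply] at *
  linarith [hs (Dt.D u w x), hs (D.D u w x)]

lemma diffForm_eq_sub (hD : D.TorsionFree) (hDt : Dt.TorsionFree)
    (hu : u ∈ E.secs) (hv : v ∈ E.secs) (hw : w ∈ E.secs) (x : M) :
    diffForm D Dt u v w x = diffForm D Dt v u w x - diffForm D Dt w u v x := by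
  have h := hD hu hv hw x
  have ht := hDt hu hv hw x
  simp only [GenConnection.torsion, diffForm, map_sub, LinearMap.sub_apply] at *
  linarith

lemma diffForm_map_mid {F : ∀ x, Module.End ℝ (E.Fib x)}
    (hF : ∀ x a b, E.g x (F x a) b = -E.g x a (F x b))
    (hD : D.PreservesEnd F) (hDt : Dt.PreservesEnd F) (hu : u ∈ E.secs) (hv : v ∈ E.secs)
    (x : M) :
    diffForm D Dt u (fun y => F y (v y)) w x = -diffForm D Dt u v (fun y => F y (w y)) x := by
  simp only [diffForm, hD hu hv x, hDt hu hv x, ← map_sub, hF]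

lemma diffForm_eq_sub_swap (hD : D.TorsionFree) (hDt : Dt.TorsionFree)
    (hu : u ∈ E.secs) (hv : v ∈ E.secs) (hw : w ∈ E.secs) (x : M) :
    diffForm D Dt u v w x = diffForm D Dt w v u x - diffForm D Dt v w u x := by
  rw [diffForm_eq_sub hD hDt hu hv hw, diffForm_swap hv hu hw, diffForm_swap hw hu hv]
  ring

lemma diffForm_congr (hD : D.TorsionFree) (hDt : Dt.TorsionFree)
    (hu : u ∈ E.secs) (hu' : u' ∈ E.secs) (hv : v ∈ E.secs) (hv' : v' ∈ E.secs)
    (hw : w ∈ E.secs) {x : M}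
    (hux : u x = u' x) (hvx : v x = v' x) (hwx : w x = w' x) :
    diffForm D Dt u v w x = diffForm D Dt u' v' w' x :=
  calc diffForm D Dt u v w x = diffForm D Dt w v u x - diffForm D Dt v w u x :=
        diffForm_eq_sub_swap hD hDt hu hv hw x
    _ = diffForm D Dt w v u' x - diffForm D Dt v w u' x := by simp only [diffForm, hux]
    _ = -diffForm D Dt u' w v x := by
        rw [← diffForm_eq_sub_swap hD hDt hu' hv hw, diffForm_swap hu' hv hw]
    _ = -diffForm D Dt u' w v' x := by simp only [diffForm, hvx]
    _ = diffForm D Dt u' v' w x := by rw [diffForm_swap hu' hv' hw]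
    _ = diffForm D Dt u' v' w' x := by simp only [diffForm, hwx]

lemma diffForm_add_left (hu : u ∈ E.secs) (hu' : u' ∈ E.secs) (hv : v ∈ E.secs) (x : M) :
    diffForm D Dt (fun y => u y + u' y) v w x
      = diffForm D Dt u v w x + diffForm D Dt u' v w x := by
  simp only [diffForm, D.add_dir hu hu' hv, Dt.add_dir hu hu' hv, ← map_add,
    ← LinearMap.add_apply]
  congr 2
  abel

lemma diffForm_smul_left (c : ℝ) (hu : u ∈ E.secs) (hv : v ∈ E.secs) (x : M) :
    diffForm D Dt (fun y => c • u y) v w x = c * diffForm D Dt u v w x := by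
  simp only [diffForm, D.smul_dir contMDiff_const hu hv, Dt.smul_dir contMDiff_const hu hv,
    ← smul_sub, map_smul, LinearMap.smul_apply, smul_eq_mul]

lemma diffForm_add_mid (hu : u ∈ E.secs) (hv : v ∈ E.secs) (hv' : v' ∈ E.secs) (x : M) :
    diffForm D Dt u (fun y => v y + v' y) w x
      = diffForm D Dt u v w x + diffForm D Dt u v' w x := by
  simp only [diffForm, D.add_sec hu hv hv', Dt.add_sec hu hv hv', ← map_add,
    ← LinearMap.add_apply]
  congr 2
  abel

lemma diffForm_smul_mid (c : ℝ) (hu : u ∈ E.secs) (hv : v ∈ E.secs) (x : M) :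
    diffForm D Dt u (fun y => c • v y) w x = c * diffForm D Dt u v w x := by
  simp only [diffForm, D.smul_sec c hu hv, Dt.smul_sec c hu hv,
    ← smul_sub, map_smul, LinearMap.smul_apply, smul_eq_mul]

lemma exists_trilinear_eq_diffForm (hD : D.TorsionFree) (hDt : Dt.TorsionFree) {x : M}
    (P : Module.End ℝ (E.Fib x)) (hP : ∀ a, P a ∈ E.valueSpace x) :
    ∃ A : E.Fib x →ₗ[ℝ] E.Fib x →ₗ[ℝ] E.Fib x →ₗ[ℝ] ℝ, ∀ a b c u v w,
      u ∈ E.secs → v ∈ E.secs → w ∈ E.secs → u x = P a → v x = P b → w x = P c →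
      A a b c = diffForm D Dt u v w x := by
  choose s hs hsx using hP
  have hcongr : ∀ {a b c u v w}, u ∈ E.secs → v ∈ E.secs → w ∈ E.secs →
      u x = P a → v x = P b → w x = P c →
      diffForm D Dt (s a) (s b) (s c) x = diffForm D Dt u v w x :=
    fun hu hv hw hux hvx hwx => diffForm_congr hD hDt (hs _) hu (hs _) hv (hs _)
      (by rw [hsx, hux]) (by rw [hsx, hvx]) (by rw [hsx, hwx])
  let A : E.Fib x →ₗ[ℝ] E.Fib x →ₗ[ℝ] E.Fib x →ₗ[ℝ] ℝ :=
    LinearMap.mk₂ ℝ (fun a b => (E.g x (Dt.D (s a) (s b) x - D.D (s a) (s b) x)).comp P)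
      (fun a a' b => LinearMap.ext fun c => by
        simp only [LinearMap.comp_apply, LinearMap.add_apply, ← hsx c]
        exact (hcongr (E.secs_add (hs a) (hs a')) (hs b) (hs c) (by simp [hsx]) (hsx b)
          (hsx c)).trans (diffForm_add_left (hs a) (hs a') (hs b) x))
      (fun r a b => LinearMap.ext fun c => by
        simp only [LinearMap.comp_apply, LinearMap.smul_apply, ← hsx c]
        exact (hcongr (E.secs_smul contMDiff_const (hs a)) (hs b) (hs c) (by simp [hsx])
          (hsx b) (hsx c)).trans (diffForm_smul_left r (hs a) (hs b) x))
      (fun a b b' => LinearMap.ext fun c => by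
        simp only [LinearMap.comp_apply, LinearMap.add_apply, ← hsx c]
        exact (hcongr (hs a) (E.secs_add (hs b) (hs b')) (hs c) (hsx a) (by simp [hsx])
          (hsx c)).trans (diffForm_add_mid (hs a) (hs b) (hs b') x))
      (fun r a b => LinearMap.ext fun c => by
        simp only [LinearMap.comp_apply, LinearMap.smul_apply, ← hsx c]
        exact (hcongr (hs a) (E.secs_smul contMDiff_const (hs b)) (hs c) (hsx a) (by simp [hsx])
          (hsx c)).trans (diffForm_smul_mid r (hs a) (hs b) x))
  have hA : ∀ a b c, A a b c = diffForm D Dt (s a) (s b) (s c) x := fun a b c => by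
    simp [A, diffForm, hsx]
  exact ⟨A, fun a b c u v w hu hv hw hux hvx hwx => (hA a b c).trans (hcongr hu hv hw hux hvx hwx)⟩

end GenConnection

namespace BnGACS

variable {E : OddExactCourantAlgebroid n M} (J : BnGACS E) (x : M)

lemma F_u₀ : J.F x (J.u₀ x) = 0 := by
  have hskew : E.g x (J.F x (J.u₀ x)) (J.u₀ x) = 0 := by
    linarith [J.skew x (J.u₀ x) (J.u₀ x), E.g_symm x (J.u₀ x) (J.F x (J.u₀ x))]
  have hsq : J.F x (J.F x (J.u₀ x)) = 0 := by
    rw [J.F_sq, J.u₀_norm, ← pow_add, Even.neg_one_pow ⟨n, rfl⟩, one_smul, neg_add_cancel]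
  have hcube := J.F_sq x (J.F x (J.u₀ x))
  rwa [hskew, mul_zero, zero_smul, add_zero, hsq, map_zero, zero_eq_neg] at hcube

lemma F_cube (v : E.Fib x) : J.F x (J.F x (J.F x v)) = -J.F x v := by
  rw [J.F_sq x v, map_add, map_neg, map_smul, F_u₀, smul_zero, add_zero]

lemma valueSpace_mem_invtSubmodule : E.valueSpace x ∈ Module.End.invtSubmodule (J.F x) := by
  rintro _ ⟨u, hu, rfl⟩
  exact ⟨_, J.smooth hu, rfl⟩

variable {D Dt : GenConnection E.toCourantAlgebroid}

lemma exists_isComplexDifferenceForm (hD : D.TorsionFree ∧ D.PreservesEnd J.F)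
    (hDt : Dt.TorsionFree ∧ Dt.PreservesEnd J.F) :
    ∃ A : E.Fib x →ₗ[ℝ] E.Fib x →ₗ[ℝ] E.Fib x →ₗ[ℝ] ℝ, IsComplexDifferenceForm (J.F x) A ∧
      ∀ u v w, u ∈ E.secs → v ∈ E.secs → w ∈ E.secs →
        A (u x) (v x) (w x) = D.diffForm Dt u v w x := by
  obtain ⟨P, hPmem, hPfix, hPF⟩ :=
    (Module.End.isSemisimple_of_cube_eq_neg (J.F_cube x)).exists_projection_commute
      (J.valueSpace_mem_invtSubmodule x)
  obtain ⟨A, hA⟩ := GenConnection.exists_trilinear_eq_diffForm hD.1 hDt.1 P hPmem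
  have hPF' : ∀ a, P (J.F x a) = J.F x (P a) := fun a => LinearMap.congr_fun hPF.eq a
  choose s hs hsx using hPmem
  have hAs : ∀ a b c, A a b c = D.diffForm Dt (s a) (s b) (s c) x := fun a b c =>
    hA a b c _ _ _ (hs a) (hs b) (hs c) (hsx a) (hsx b) (hsx c)
  refine ⟨A, .of_sq_eq (fun a b c => ?_) (fun a b c => ?_) (fun a b c => ?_) (J.F_sq x)
    (J.F_u₀ x), fun u v w hu hv hw => hA _ _ _ u v w hu hv hw ?_ ?_ ?_⟩
  · rw [hAs, hAs, GenConnection.diffForm_swap (hs a) (hs b) (hs c)]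
  · rw [hAs, hAs, hAs, GenConnection.diffForm_eq_sub hD.1 hDt.1 (hs a) (hs b) (hs c)]
  · rw [hA a (J.F x b) c _ _ _ (hs a) (J.smooth (hs b)) (hs c) (hsx a) (by rw [hPF', hsx])
      (hsx c), hA a b (J.F x c) _ _ _ (hs a) (hs b) (J.smooth (hs c)) (hsx a) (hsx b)
      (by rw [hPF', hsx])]
    exact GenConnection.diffForm_map_mid J.skew hD.2 hDt.2 (hs a) (hs b) x
  all_goals exact (hPfix _ ⟨_, ‹_›, rfl⟩).symm

end BnGACS

theorem bn_complex_connections_difference_general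
    (E : OddExactCourantAlgebroid n M) (J : BnGACS E)
    (D Dt : GenConnection E.toCourantAlgebroid)
    (hD : D.TorsionFree ∧ D.PreservesEnd J.F)
    (hDt : Dt.TorsionFree ∧ Dt.PreservesEnd J.F) :
    ∃ η : ∀ x, E.Fib x →ₗ[ℝ] E.Fib x →ₗ[ℝ] E.Fib x →ₗ[ℝ] ℂ,
      (∀ x u v w, η x u v w = η x v u w) ∧
      (∀ x u v w, η x (J.F x u) v w = Complex.I * η x u v w) ∧
      (∀ x u v w, η x u (J.F x v) w = Complex.I * η x u v w) ∧
      (∀ x u v w, η x u v (J.F x w) = -(Complex.I * η x u v w)) ∧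
      ∀ u v w, u ∈ E.secs → v ∈ E.secs → w ∈ E.secs → ∀ x,
        E.g x (Dt.D u v x) (w x)
          = E.g x (D.D u v x) (w x)
            + (η x (u x) (v x) (w x) - η x (u x) (w x) (v x)).re := by
  choose A hA hAsec using fun x => J.exists_isComplexDifferenceForm x hD hDt
  refine ⟨fun x => complexPart (J.F x) (A x), fun x => (hA x).complexPart_comm,
    fun x => (hA x).complexPart_map_left, fun x => (hA x).complexPart_map_mid,
    fun x => (hA x).complexPart_map_right, fun u v w hu hv hw x => ?_⟩
  rw [(hA x).re_complexPart_sub, hAsec x u v w hu hv hw, GenConnection.diffForm, map_sub,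
    LinearMap.sub_apply, add_sub_cancel]

/-- Let `𝓕` be a `Bₙ`-generalized complex structure on an odd exact
Courant algebroid `E` with i-eigenbundle `L ⊂ E^ℂ`.  Any two `Bₙ`-complex generalized
connections `D, D̃` (torsion-free generalized connections preserving `𝓕`) are related
by `D̃ = D + Re(sk η)` for some `η ∈ Γ(S²L* ⊗ L̄*)`.  Here `η` is encoded as a family
of ℝ-trilinear complex-valued forms (the restriction of the ℂ-trilinear form to real
vectors); the conditions `η(𝓕u,v,w) = iη(u,v,w)`, `η(u,𝓕v,w) = iη(u,v,w)` and
`η(u,v,𝓕w) = −iη(u,v,w)` express that `η` lies in `S²L*⊗L̄*` (extended by zero via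
`E^ℂ = L ⊕ L̄ ⊕ U^ℂ`), and `(sk η)(u,v,w) = η(u,v,w) − η(u,w,v)`. -/
theorem bn_complex_connections_difference
    (E : OddExactCourantAlgebroid n M) (J : BnGACS E) (hint : J.Integrable)
    (D Dt : GenConnection E.toCourantAlgebroid)
    (hD : D.TorsionFree ∧ D.PreservesEnd J.F)
    (hDt : Dt.TorsionFree ∧ Dt.PreservesEnd J.F) :
    ∃ η : ∀ x, E.Fib x →ₗ[ℝ] E.Fib x →ₗ[ℝ] E.Fib x →ₗ[ℝ] ℂ,
      (∀ x u v w, η x u v w = η x v u w) ∧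
      (∀ x u v w, η x (J.F x u) v w = Complex.I * η x u v w) ∧
      (∀ x u v w, η x u (J.F x v) w = Complex.I * η x u v w) ∧
      (∀ x u v w, η x u v (J.F x w) = -(Complex.I * η x u v w)) ∧
      ∀ u v w, u ∈ E.secs → v ∈ E.secs → w ∈ E.secs → ∀ x,
        E.g x (Dt.D u v x) (w x)
          = E.g x (D.D u v x) (w x)
            + (η x (u x) (v x) (w x) - η x (u x) (w x) (v x)).re :=
  bn_complex_connections_difference_general E J D Dt hD hDt
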